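/- The expected inference error of the Bayes-optimal point estimate is bounded below by a Geo-Ind-dependent quantity: under a uniform prior on two locations v_1, v_2 with d(1,2) ≤ γ and an obfuscation matrix satisfying ε-Geo-Ind, for any deterministic attack A: V → {v_1, v_2}, the probability of incorrect inference is at least 1/(1 + e^{ε·d(1,2)}). -/
import Mathlib


theorem stmt_18 {V : Type*} [Fintype V] [DecidableEq V] [MetricSpace V]
    (Z : V → V → ℝ) (ε γ : ℝ) (hγ : 0 < γ)
    (hZ : ∀ i k : V, 0 ≤ Z i k) (hrow : ∀ i : V, ∑ k, Z i k = 1)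
    (v1 v2 : V) (hne : v1 ≠ v2) (hd : dist v1 v2 ≤ γ)
    (h12 : ∀ k : V, Z v1 k ≤ Real.exp (ε * dist v1 v2) * Z v2 k)
    (h21 : ∀ k : V, Z v2 k ≤ Real.exp (ε * dist v1 v2) * Z v1 k)
    (A : V → V) (hA : ∀ k : V, A k = v1 ∨ A k = v2) :
    1 / (1 + Real.exp (ε * dist v1 v2)) ≤
      (1 / 2) * ∑ k, Z v1 k * (if A k ≠ v1 then 1 else 0) +
      (1 / 2) * ∑ k, Z v2 k * (if A k ≠ v2 then 1 else 0) := by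
  set E := Real.exp (ε * dist v1 v2) with hE
  have hEpos : 0 < E := Real.exp_pos _
  have h1E : 0 < 1 + E := by linarith
  have key : ∀ k : V, (Z v1 k + Z v2 k) / (1 + E) ≤
      Z v1 k * (if A k ≠ v1 then 1 else 0) + Z v2 k * (if A k ≠ v2 then 1 else 0) := by
    intro k
    rcases hA k with h | h
    · rw [if_neg (by simp [h]), if_pos (by simp [h, hne])]
      rw [div_le_iff₀ h1E]
      have := h12 k
      nlinarith [hZ v2 k]
    · rw [if_pos (by simp [h, hne.symm]), if_neg (by simp [h])]
      rw [div_le_iff₀ h1E]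
      have := h21 k
      nlinarith [hZ v1 k]
  calc 1 / (1 + E) = (1/2) * ((∑ k, Z v1 k + ∑ k, Z v2 k) / (1 + E)) := by
        rw [hrow, hrow]; ring
    _ = (1/2) * ∑ k, (Z v1 k + Z v2 k) / (1 + E) := by
        rw [← Finset.sum_add_distrib, Finset.sum_div]
    _ ≤ (1/2) * ∑ k, (Z v1 k * (if A k ≠ v1 then 1 else 0) +
          Z v2 k * (if A k ≠ v2 then 1 else 0)) := by
        apply mul_le_mul_of_nonneg_left _ (by norm_num)
        exact Finset.sum_le_sum fun k _ => key k
    _ = _ := by rw [Finset.sum_add_distrib]; ring
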